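/- arXiv:1809.07790 — 2 statements merged into one kernel-verified Lean document; each statement's English description precedes it below -/
import Mathlib

section
/- Let a₀ > 0, c₀ ∈ ℝ, and m(p) = 1/(e^{a₀|p|²+c₀}+1). Then ∫_{ℝ³} |p|⁴ (m − m²) dp = (5/(2a₀)) · ∫_{ℝ³} |p|² m dp. -/
/-!
The profile `M(r) = 1 / (exp (a r² + c) + 1)` satisfies `M' = -2 a r (M - M²)`, and it decays
like a Gaussian. Integrating `(r ^ (n + 1) M)'` over `(0, ∞)` therefore gives
`2 a ∫ r ^ (n + 2) (M - M²) = (n + 1) ∫ r ^ n M`. In polar coordinates on a space of dimension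
`d` the radial weight is `r ^ (d - 1)`, so `n = d - 1 + k` yields the factor `(k + d) / (2 a)`;
here `d = 3`, `k = 2`.
-/

open Real MeasureTheory Set Filter Topology

noncomputable def fermiDirac (a c r : ℝ) : ℝ := 1 / (exp (a * r ^ 2 + c) + 1)

lemma fermiDirac_pos (a c r : ℝ) : 0 < fermiDirac a c r := by
  unfold fermiDirac; positivity

lemma fermiDirac_le_one (a c r : ℝ) : fermiDirac a c r ≤ 1 := by
  unfold fermiDirac
  rw [div_le_one (by positivity)]
  linarith [exp_pos (a * r ^ 2 + c)]

lemma fermiDirac_le_exp (a c r : ℝ) : fermiDirac a c r ≤ exp (-(a * r ^ 2 + c)) := by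
  rw [fermiDirac, exp_neg, ← one_div]
  exact one_div_le_one_div_of_le (exp_pos _) (by linarith)

lemma fermiDirac_sub_sq_nonneg (a c r : ℝ) : 0 ≤ fermiDirac a c r - fermiDirac a c r ^ 2 := by
  nlinarith [fermiDirac_pos a c r, fermiDirac_le_one a c r]

lemma hasDerivAt_fermiDirac (a c r : ℝ) :
    HasDerivAt (fermiDirac a c)
      (-(2 * a * r) * (fermiDirac a c r - fermiDirac a c r ^ 2)) r := by
  have hden : HasDerivAt (fun r => exp (a * r ^ 2 + c) + 1)
      (exp (a * r ^ 2 + c) * (a * (2 * r))) r := by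
    simpa using (((hasDerivAt_pow 2 r).const_mul a).add_const c).exp.add_const 1
  have hne : exp (a * r ^ 2 + c) + 1 ≠ 0 := by positivity
  refine (hden.fun_inv hne).congr_deriv ?_ |>.congr_of_eventuallyEq ?_
  · simp only [fermiDirac]
    field_simp
    ring
  · filter_upwards with x using one_div _

section Radial

variable {a : ℝ} (ha : 0 < a) (c : ℝ)
include ha

lemma integrableOn_pow_mul_exp_neg_mul_sq_add (k : ℕ) :
    IntegrableOn (fun r : ℝ => r ^ k * exp (-(a * r ^ 2 + c))) (Ioi 0) := by
  have h := (integrableOn_rpow_mul_exp_neg_mul_sq ha (s := k)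
    (by linarith [(Nat.cast_nonneg k : (0 : ℝ) ≤ k)])).const_mul (exp (-c))
  refine IntegrableOn.congr_fun h (fun r _ => ?_) measurableSet_Ioi
  simp only [rpow_natCast, neg_add, exp_add, neg_mul]
  ring

lemma integrableOn_pow_mul_fermiDirac (k : ℕ) :
    IntegrableOn (fun r : ℝ => r ^ k * fermiDirac a c r) (Ioi 0) := by
  refine (integrableOn_pow_mul_exp_neg_mul_sq_add ha c k).mono'
    (by unfold fermiDirac; fun_prop) ?_
  filter_upwards [ae_restrict_mem measurableSet_Ioi] with r (hr : 0 < r)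
  rw [norm_of_nonneg (by have := fermiDirac_pos a c r; positivity)]
  gcongr
  exact fermiDirac_le_exp a c r

lemma integrableOn_pow_mul_fermiDirac_sub_sq (k : ℕ) :
    IntegrableOn (fun r : ℝ => r ^ k * (fermiDirac a c r - fermiDirac a c r ^ 2)) (Ioi 0) := by
  refine (integrableOn_pow_mul_fermiDirac ha c k).mono' (by unfold fermiDirac; fun_prop) ?_
  filter_upwards [ae_restrict_mem measurableSet_Ioi] with r (hr : 0 < r)
  rw [norm_of_nonneg (by have := fermiDirac_sub_sq_nonneg a c r; positivity)]
  gcongr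
  exact sub_le_self _ (sq_nonneg _)

lemma tendsto_pow_mul_fermiDirac_atTop (k : ℕ) :
    Tendsto (fun r : ℝ => r ^ k * fermiDirac a c r) atTop (𝓝 0) := by
  have hgauss : Tendsto (fun r : ℝ => exp (-c) * (|r| ^ (k : ℝ) * exp (-a * r ^ 2)))
      atTop (𝓝 0) := by
    simpa using tendsto_const_nhds.mul
      ((tendsto_rpow_abs_mul_exp_neg_mul_sq_cocompact ha k).mono_left
        (cocompact_eq_atBot_atTop (α := ℝ) ▸ le_sup_right))
  refine squeeze_zero' ?_ ?_ hgauss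
  · filter_upwards [eventually_ge_atTop 0] with r hr
    have := fermiDirac_pos a c r
    positivity
  · filter_upwards [eventually_ge_atTop 0] with r hr
    calc r ^ k * fermiDirac a c r ≤ r ^ k * exp (-(a * r ^ 2 + c)) := by
          gcongr; exact fermiDirac_le_exp a c r
      _ = exp (-c) * (|r| ^ (k : ℝ) * exp (-a * r ^ 2)) := by
          rw [abs_of_nonneg hr, rpow_natCast, neg_add, exp_add, neg_mul]
          ring

lemma integral_Ioi_pow_mul_fermiDirac_sub_sq (n : ℕ) :
    ∫ r in Ioi (0 : ℝ), r ^ (n + 2) * (fermiDirac a c r - fermiDirac a c r ^ 2) =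
      (n + 1) / (2 * a) * ∫ r in Ioi (0 : ℝ), r ^ n * fermiDirac a c r := by
  set M := fermiDirac a c
  have hderiv : ∀ r : ℝ, HasDerivAt (fun r => r ^ (n + 1) * M r)
      ((n + 1) * (r ^ n * M r) - 2 * a * (r ^ (n + 2) * (M r - M r ^ 2))) r := by
    intro r
    refine ((hasDerivAt_pow (n + 1) r).mul (hasDerivAt_fermiDirac a c r)).congr_deriv ?_
    push_cast
    ring
  have hint₁ := (integrableOn_pow_mul_fermiDirac ha c n).const_mul (n + 1 : ℝ)
  have hint₂ := (integrableOn_pow_mul_fermiDirac_sub_sq ha c (n + 2)).const_mul (2 * a)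
  have hFTC := integral_Ioi_of_hasDerivAt_of_tendsto' (fun r _ => hderiv r) (hint₁.sub hint₂)
    (tendsto_pow_mul_fermiDirac_atTop ha c (n + 1))
  rw [integral_sub hint₁ hint₂, integral_const_mul, integral_const_mul,
    zero_pow n.succ_ne_zero, zero_mul, sub_zero] at hFTC
  rw [div_mul_eq_mul_div, eq_div_iff (by positivity)]
  linarith

theorem integral_norm_pow_mul_fermiDirac_sub_sq {E : Type*} [NormedAddCommGroup E]
    [NormedSpace ℝ E] [FiniteDimensional ℝ E] [Nontrivial E] [MeasurableSpace E] [BorelSpace E]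
    (μ : Measure E) [μ.IsAddHaarMeasure] (k : ℕ) :
    ∫ x, ‖x‖ ^ (k + 2) * (fermiDirac a c ‖x‖ - fermiDirac a c ‖x‖ ^ 2) ∂μ =
      (k + Module.finrank ℝ E) / (2 * a) * ∫ x, ‖x‖ ^ k * fermiDirac a c ‖x‖ ∂μ := by
  set d := Module.finrank ℝ E
  have hd : d - 1 + k + 1 = k + d := by have : 0 < d := Module.finrank_pos; omega
  rw [integral_fun_norm_addHaar μ (fun r => r ^ (k + 2) * (fermiDirac a c r - fermiDirac a c r ^ 2)),
    integral_fun_norm_addHaar μ (fun r => r ^ k * fermiDirac a c r)]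
  simp only [smul_eq_mul, ← mul_assoc, ← pow_add, ← add_assoc]
  rw [integral_Ioi_pow_mul_fermiDirac_sub_sq ha c, ← Nat.cast_add_one, hd]
  push_cast
  ring

end Radial

theorem stmt_18 (a₀ : ℝ) (ha : 0 < a₀) (c₀ : ℝ)
    (m : EuclideanSpace ℝ (Fin 3) → ℝ)
    (hm : ∀ p, m p = 1 / (exp (a₀ * ‖p‖ ^ 2 + c₀) + 1)) :
    ∫ p : EuclideanSpace ℝ (Fin 3), ‖p‖ ^ 4 * (m p - m p ^ 2) =
      (5 / (2 * a₀)) * ∫ p : EuclideanSpace ℝ (Fin 3), ‖p‖ ^ 2 * m p := by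
  obtain rfl : m = fun p => fermiDirac a₀ c₀ ‖p‖ := funext hm
  have h := integral_norm_pow_mul_fermiDirac_sub_sq ha c₀
    (volume : Measure (EuclideanSpace ℝ (Fin 3))) 2
  rw [finrank_euclideanSpace_fin] at h
  convert h using 2
  norm_num
end

section
/- Let a₀ > 0, c₀ ∈ ℝ, m(p) = 1/(e^{a₀|p|²+c₀}+1), and set N₀ = ∫ m dp, E₀ = ∫ |p|² m dp, k = ∫ (m − m²) dp (all integrals over ℝ³). If c₀ > −ln 3, then E₀·k − 9N₀²/(10a₀) > 0. -/
/-!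
Write `m p = f ‖p‖` with the radial profile `f r = 1 / (e^{a r² + c} + 1)`, whose derivative is
`f' = -2 a r (f - f²)`. In spherical coordinates and after one integration by parts, `N₀` and `E₀`
become moments of the same density `f - f²` that defines `k`: with `μₙ = ∫₀^∞ rⁿ (f - f²) dr` and
`κ` the volume of the unit ball, `N₀ = 2 a κ μ₄`, `E₀ = (6 a κ / 5) μ₆` and `k = 3 κ μ₂`. Hence
`E₀ k - 9 N₀² / (10 a) = (18 a κ² / 5) (μ₂ μ₆ - μ₄²)`, which is positive by the strict
Cauchy–Schwarz inequality for the weight `r² (f - f²)`.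
-/

open Real MeasureTheory Set Filter

section CauchySchwarz

variable {α : Type*} [MeasurableSpace α] {μ : Measure α}

lemma integral_pos_of_ae_pos_on {f : α → ℝ} {s : Set α} (hf : 0 ≤ᵐ[μ] f)
    (hfi : Integrable f μ) (hs : μ s ≠ 0) (hpos : ∀ᵐ a ∂μ, a ∈ s → 0 < f a) :
    0 < ∫ a, f a ∂μ := by
  rw [integral_pos_iff_support_of_nonneg_ae hf hfi]
  refine (pos_iff_ne_zero.2 hs).trans_le (measure_mono_ae ?_)
  filter_upwards [hpos] with a ha has
  exact (ha has).ne'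

theorem sq_integral_mul_lt_integral_mul_integral {w x : α → ℝ} (hw : ∀ᵐ a ∂μ, 0 < w a)
    (hw₀ : Integrable w μ) (hw₁ : Integrable (fun a ↦ w a * x a) μ)
    (hw₂ : Integrable (fun a ↦ w a * x a ^ 2) μ) (hx : ∀ c, μ {a | x a ≠ c} ≠ 0) :
    (∫ a, w a * x a ∂μ) ^ 2 < (∫ a, w a ∂μ) * ∫ a, w a * x a ^ 2 ∂μ := by
  set A := ∫ a, w a ∂μ
  set B := ∫ a, w a * x a ∂μ
  set C := ∫ a, w a * x a ^ 2 ∂μ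
  have hA : 0 < A :=
    integral_pos_of_ae_pos_on (hw.mono fun a ha ↦ ha.le) hw₀ (s := univ)
      (fun h ↦ hx 0 (measure_mono_null (subset_univ _) h)) (hw.mono fun a ha _ ↦ ha)
  have hexpand : (fun a ↦ w a * (A * x a - B) ^ 2)
      = fun a ↦ A ^ 2 * (w a * x a ^ 2) - 2 * A * B * (w a * x a) + B ^ 2 * w a := by
    ext a; ring
  have hint₂ := hw₂.const_mul (A ^ 2)
  have hint₁ := hw₁.const_mul (2 * A * B)
  have hint₀ := hw₀.const_mul (B ^ 2)
  have hint₂₁ : Integrable (fun a ↦ A ^ 2 * (w a * x a ^ 2) - 2 * A * B * (w a * x a)) μ :=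
    hint₂.sub hint₁
  have hvar : ∫ a, w a * (A * x a - B) ^ 2 ∂μ = A * (A * C - B ^ 2) := by
    rw [hexpand, integral_add hint₂₁ hint₀, integral_sub hint₂ hint₁,
      integral_const_mul, integral_const_mul, integral_const_mul]
    ring
  have hpos : 0 < ∫ a, w a * (A * x a - B) ^ 2 ∂μ := by
    refine integral_pos_of_ae_pos_on (hw.mono fun a ha ↦ by positivity)
      (by rw [hexpand]; exact hint₂₁.add hint₀) (hx (B / A)) ?_
    filter_upwards [hw] with a ha (hxa : x a ≠ B / A)
    have : A * x a - B ≠ 0 := by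
      intro h
      exact hxa (by field_simp; linarith)
    positivity
  rw [hvar] at hpos
  linarith [(mul_pos_iff_of_pos_left hA).1 hpos]

end CauchySchwarz

noncomputable def fermi (a c r : ℝ) : ℝ := 1 / (exp (a * r ^ 2 + c) + 1)

noncomputable def fermiMoment (a c : ℝ) (n : ℕ) : ℝ :=
  ∫ r in Ioi 0, r ^ n * (fermi a c r - fermi a c r ^ 2)

section Fermi

variable {a c : ℝ}

lemma continuous_fermi : Continuous (fermi a c) := by
  unfold fermi
  fun_prop (disch := intro r; positivity)

lemma fermi_pos (r : ℝ) : 0 < fermi a c r := by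
  unfold fermi; positivity

lemma fermi_lt_one (r : ℝ) : fermi a c r < 1 := by
  unfold fermi
  rw [div_lt_one (by positivity)]
  linarith [exp_pos (a * r ^ 2 + c)]

lemma fermi_le_exp_neg (r : ℝ) : fermi a c r ≤ exp (-(a * r ^ 2 + c)) := by
  unfold fermi
  rw [exp_neg, one_div, inv_le_inv₀ (by positivity) (exp_pos _)]
  linarith

lemma fermi_sub_sq_pos (r : ℝ) : 0 < fermi a c r - fermi a c r ^ 2 := by
  nlinarith [fermi_pos (a := a) (c := c) r, fermi_lt_one (a := a) (c := c) r]

lemma hasDerivAt_fermi (r : ℝ) :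
    HasDerivAt (fermi a c) (-(2 * a * r * (fermi a c r - fermi a c r ^ 2))) r := by
  have hu : HasDerivAt (fun r ↦ a * r ^ 2 + c) (a * (2 * r)) r := by
    simpa using ((hasDerivAt_pow 2 r).const_mul a).add_const c
  have hne : exp (a * r ^ 2 + c) + 1 ≠ 0 := by positivity
  have hf : fermi a c = fun r ↦ (exp (a * r ^ 2 + c) + 1)⁻¹ := by
    ext r; simp [fermi]
  rw [hf]
  refine ((hu.exp.add_const 1).inv hne).congr_deriv ?_
  field_simp
  ring

lemma integrableOn_pow_mul_fermi (ha : 0 < a) (n : ℕ) :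
    IntegrableOn (fun r ↦ r ^ n * fermi a c r) (Ioi 0) := by
  have hg : Integrable fun r : ℝ ↦ exp (-c) * (r ^ (n : ℝ) * exp (-a * r ^ 2)) :=
    (integrable_rpow_mul_exp_neg_mul_sq ha (by linarith [n.cast_nonneg (α := ℝ)])).const_mul _
  refine hg.integrableOn.mono'
    ((continuous_pow n).mul continuous_fermi).aestronglyMeasurable ?_
  filter_upwards [ae_restrict_mem measurableSet_Ioi] with r (hr : 0 < r)
  rw [norm_of_nonneg (mul_nonneg (by positivity) (fermi_pos r).le), rpow_natCast]
  calc r ^ n * fermi a c r ≤ r ^ n * exp (-(a * r ^ 2 + c)) :=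
        mul_le_mul_of_nonneg_left (fermi_le_exp_neg r) (by positivity)
    _ = exp (-c) * (r ^ n * exp (-a * r ^ 2)) := by
        rw [neg_add, exp_add, neg_mul]; ring

lemma integrableOn_pow_mul_fermi_sub_sq (ha : 0 < a) (n : ℕ) :
    IntegrableOn (fun r ↦ r ^ n * (fermi a c r - fermi a c r ^ 2)) (Ioi 0) := by
  refine (integrableOn_pow_mul_fermi (c := c) ha n).mono'
    ((continuous_pow n).mul
      (continuous_fermi.sub (continuous_fermi.pow 2))).aestronglyMeasurable ?_
  filter_upwards [ae_restrict_mem measurableSet_Ioi] with r (hr : 0 < r)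
  rw [norm_of_nonneg (mul_nonneg (by positivity) (fermi_sub_sq_pos r).le)]
  exact mul_le_mul_of_nonneg_left (by nlinarith) (by positivity)

lemma integral_pow_mul_fermi (ha : 0 < a) (n : ℕ) :
    (n + 1) * ∫ r in Ioi 0, r ^ n * fermi a c r = 2 * a * fermiMoment a c (n + 2) := by
  have hF : ∀ r, HasDerivAt (fun r ↦ r ^ (n + 1) * fermi a c r)
      ((n + 1) * (r ^ n * fermi a c r)
        - 2 * a * (r ^ (n + 2) * (fermi a c r - fermi a c r ^ 2))) r := by
    intro r
    refine ((hasDerivAt_pow (n + 1) r).mul (hasDerivAt_fermi r)).congr_deriv ?_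
    push_cast
    ring
  have hint₁ := (integrableOn_pow_mul_fermi (c := c) ha n).const_mul ((n : ℝ) + 1)
  have hint₂ := (integrableOn_pow_mul_fermi_sub_sq (c := c) ha (n + 2)).const_mul (2 * a)
  -- The boundary term at `∞` vanishes because `r ^ (n + 1) * f` and its derivative are integrable.
  have hlim := tendsto_zero_of_hasDerivAt_of_integrableOn_Ioi (fun r _ ↦ hF r)
    (hint₁.sub hint₂) (integrableOn_pow_mul_fermi ha (n + 1))
  have hftc := integral_Ioi_of_hasDerivAt_of_tendsto' (fun r _ ↦ hF r) (hint₁.sub hint₂) hlim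
  rw [integral_sub hint₁ hint₂, integral_const_mul, integral_const_mul] at hftc
  simp only [ne_eq, Nat.add_eq_zero_iff, one_ne_zero, and_false, not_false_eq_true, zero_pow,
    zero_mul, sub_zero] at hftc
  unfold fermiMoment
  linarith

lemma fermiMoment_four_sq_lt (ha : 0 < a) :
    fermiMoment a c 4 ^ 2 < fermiMoment a c 2 * fermiMoment a c 6 := by
  have hvol : ∀ t : ℝ, volume.restrict (Ioi (0 : ℝ)) {r | r ^ 2 ≠ t} ≠ 0 := by
    intro t
    rw [Measure.restrict_apply' measurableSet_Ioi]
    have hsub : Ioi (|t| + 1) ⊆ {r | r ^ 2 ≠ t} ∩ Ioi 0 := by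
      intro r (hr : |t| + 1 < r)
      have := le_abs_self t
      refine ⟨?_, ?_⟩
      · show r ^ 2 ≠ t
        nlinarith
      · show 0 < r
        linarith [abs_nonneg t]
    refine ne_bot_of_le_ne_bot ?_ (measure_mono hsub)
    rw [volume_Ioi]
    exact ENNReal.top_ne_zero
  have hmoment (n : ℕ) (g : ℝ → ℝ) (hg : ∀ r, g r = r ^ n * (fermi a c r - fermi a c r ^ 2)) :
      Integrable g (volume.restrict (Ioi 0)) :=
    (integrableOn_pow_mul_fermi_sub_sq ha n).congr_fun (fun r _ ↦ (hg r).symm) measurableSet_Ioi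
  have hcs := sq_integral_mul_lt_integral_mul_integral
    (μ := volume.restrict (Ioi 0)) (x := fun r ↦ r ^ 2)
    (ae_restrict_mem measurableSet_Ioi |>.mono fun r (hr : 0 < r) ↦
      mul_pos (pow_pos hr 2) (fermi_sub_sq_pos (a := a) (c := c) r))
    (hmoment 2 _ fun _ ↦ rfl)
    (hmoment 4 _ fun _ ↦ by ring) (hmoment 6 _ fun _ ↦ by ring) hvol
  unfold fermiMoment
  convert hcs using 3 <;> ext r <;> ring

end Fermi

lemma integral_norm_euclideanSpace_three (F : ℝ → ℝ) :
    ∫ p : EuclideanSpace ℝ (Fin 3), F ‖p‖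
      = 3 * volume.real (Metric.ball (0 : EuclideanSpace ℝ (Fin 3)) 1)
        * ∫ r in Ioi 0, r ^ 2 * F r := by
  rw [integral_fun_norm_addHaar volume F]
  simp [mul_assoc]

theorem stmt_19_general (a₀ : ℝ) (ha : 0 < a₀) (c₀ : ℝ)
    (m : EuclideanSpace ℝ (Fin 3) → ℝ)
    (hm : ∀ p, m p = 1 / (exp (a₀ * ‖p‖ ^ 2 + c₀) + 1))
    (N₀ E₀ k : ℝ)
    (hN : N₀ = ∫ p : EuclideanSpace ℝ (Fin 3), m p)
    (hE : E₀ = ∫ p : EuclideanSpace ℝ (Fin 3), ‖p‖ ^ 2 * m p)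
    (hk : k = ∫ p : EuclideanSpace ℝ (Fin 3), (m p - m p ^ 2)) :
    0 < E₀ * k - 9 * N₀ ^ 2 / (10 * a₀) := by
  set κ := volume.real (Metric.ball (0 : EuclideanSpace ℝ (Fin 3)) 1)
  have hκ : 0 < κ := ENNReal.toReal_pos (Metric.measure_ball_pos _ _ one_pos).ne'
    measure_ball_lt_top.ne
  have hm' : ∀ p, m p = fermi a₀ c₀ ‖p‖ := hm
  simp only [hm'] at hN hE hk
  have hN' : N₀ = 2 * a₀ * κ * fermiMoment a₀ c₀ 4 := by
    have hibp := integral_pow_mul_fermi (c := c₀) ha 2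
    rw [hN, integral_norm_euclideanSpace_three (fermi a₀ c₀)]
    norm_num at hibp
    linear_combination κ * hibp
  have hE' : E₀ = 6 * a₀ * κ / 5 * fermiMoment a₀ c₀ 6 := by
    have hibp := integral_pow_mul_fermi (c := c₀) ha 4
    rw [hE, integral_norm_euclideanSpace_three (fun r ↦ r ^ 2 * fermi a₀ c₀ r)]
    simp only [← mul_assoc, ← pow_add]
    norm_num at hibp
    linear_combination 3 / 5 * κ * hibp
  have hk' : k = 3 * κ * fermiMoment a₀ c₀ 2 :=
    hk.trans (integral_norm_euclideanSpace_three fun r ↦ fermi a₀ c₀ r - fermi a₀ c₀ r ^ 2)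
  have hform : E₀ * k - 9 * N₀ ^ 2 / (10 * a₀) = 18 * a₀ * κ ^ 2 / 5
      * (fermiMoment a₀ c₀ 2 * fermiMoment a₀ c₀ 6 - fermiMoment a₀ c₀ 4 ^ 2) := by
    rw [hN', hE', hk']
    field_simp
    ring
  rw [hform]
  exact mul_pos (by positivity) (sub_pos.2 (fermiMoment_four_sq_lt ha))

theorem stmt_19 (a₀ : ℝ) (ha : 0 < a₀) (c₀ : ℝ) (hc : -Real.log 3 < c₀)
    (m : EuclideanSpace ℝ (Fin 3) → ℝ)
    (hm : ∀ p, m p = 1 / (exp (a₀ * ‖p‖ ^ 2 + c₀) + 1))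
    (N₀ E₀ k : ℝ)
    (hN : N₀ = ∫ p : EuclideanSpace ℝ (Fin 3), m p)
    (hE : E₀ = ∫ p : EuclideanSpace ℝ (Fin 3), ‖p‖ ^ 2 * m p)
    (hk : k = ∫ p : EuclideanSpace ℝ (Fin 3), (m p - m p ^ 2)) :
    0 < E₀ * k - 9 * N₀ ^ 2 / (10 * a₀) :=
  stmt_19_general a₀ ha c₀ m hm N₀ E₀ k hN hE hk
end
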